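/- Let K be a local field and n a positive integer with char(K) ∤ n. Let P ∈ K[x,y] be a nonzero homogeneous polynomial, and let R = {(x,y) ∈ K × K : min(v(x), v(y)) = 0}. Then for every t₀ ∈ ℙ¹(K) there is a punctured neighbourhood U_{t₀} of t₀ such that, for all (x,y) ∈ R with x/y ∈ U_{t₀} and P(x,y) ≠ 0, the class of P(x,y) in K^*/(K^*)^n depends only on the classes of x − t₀·y and of y in K^*/(K^*)^n (only on the classes of x and of y if t₀ = ∞). -/

import Mathlib

/-- A (nonarchimedean) local field structure on a field `K`: a discrete valuation
`v : K → ℤ ∪ {⊤}` (with `v 0 = ⊤`), normalized so that `v (K^*) = ℤ`, with respect to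
which `K` is complete, and whose residue field is finite. -/
structure IsLocalField {K : Type*} [Field K] (v : K → WithTop ℤ) : Prop where
  map_zero : v 0 = ⊤
  ne_top : ∀ x : K, x ≠ 0 → v x ≠ ⊤
  map_mul : ∀ x y : K, v (x * y) = v x + v y
  min_le_add : ∀ x y : K, min (v x) (v y) ≤ v (x + y)
  exists_eq : ∀ k : ℤ, ∃ x : K, v x = (k : WithTop ℤ)
  complete : ∀ a : ℕ → K,
      (∀ k : ℤ, ∃ N : ℕ, ∀ m m' : ℕ, N ≤ m → N ≤ m' → (k : WithTop ℤ) ≤ v (a m - a m')) →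
      ∃ L : K, ∀ k : ℤ, ∃ N : ℕ, ∀ m : ℕ, N ≤ m → (k : WithTop ℤ) ≤ v (a m - L)
  finite_residue : ∃ T : Finset K, ∀ x : K, 0 ≤ v x → ∃ t ∈ T, (1 : WithTop ℤ) ≤ v (x - t)

/-!
Dehomogenising at `t₀`, `P(x, y) = y ^ d * q((x - t₀ y) / y)` for a one-variable polynomial `q`.
Write `q = X ^ i * r` with `r(0) ≠ 0`. For `w` close to `0`, `r(w) / r(0)` is a principal unit
`1 + ε` with `v ε` as large as we like, and by Hensel's lemma (Newton's iteration for `X ^ n - u`,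
which converges by completeness) such a unit is an `n`-th power once `v ε > 2 v(n)`. So near `t₀`
the class of `P(x, y)` modulo `n`-th powers is that of `y ^ d * w ^ i * r(0)` with
`w = (x - t₀ y) / y`, and it only depends on the classes of `y` and `x - t₀ y`. At `t₀ = ∞` the
same argument applies to `P(x, y) = x ^ d * q(y / x)`.
-/

open Polynomial

namespace IsLocalField

variable {K : Type*} [Field K] {v : K → WithTop ℤ}

theorem map_one (h : IsLocalField v) : v 1 = 0 := by
  obtain ⟨c, hc⟩ := WithTop.ne_top_iff_exists.mp (h.ne_top 1 one_ne_zero)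
  have h11 := h.map_mul 1 1
  rw [mul_one, ← hc, ← WithTop.coe_add, WithTop.coe_inj] at h11
  rw [← hc, show c = 0 by omega]
  rfl

def addValuation (h : IsLocalField v) : AddValuation K (WithTop ℤ) :=
  AddValuation.of v h.map_zero h.map_one h.min_le_add h.map_mul

end IsLocalField

/-- On nonzero elements, equality of classes in `G₀ˣ / (G₀ˣ) ^ n`; `0` is related only to `0`. -/
def EqUpToNthPower {G₀ : Type*} [CommGroupWithZero G₀] (n : ℕ) (x y : G₀) : Prop :=
  ∃ s : G₀, s ≠ 0 ∧ x = s ^ n * y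

namespace EqUpToNthPower

variable {G₀ : Type*} [CommGroupWithZero G₀] {n : ℕ} {x y z x' y' : G₀}

theorem refl (x : G₀) : EqUpToNthPower n x x := ⟨1, one_ne_zero, by rw [one_pow, one_mul]⟩

theorem symm (h : EqUpToNthPower n x y) : EqUpToNthPower n y x := by
  obtain ⟨s, hs, rfl⟩ := h
  exact ⟨s⁻¹, inv_ne_zero hs, by rw [inv_pow, inv_mul_cancel_left₀ (pow_ne_zero n hs)]⟩

theorem trans (h : EqUpToNthPower n x y) (h' : EqUpToNthPower n y z) : EqUpToNthPower n x z := by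
  obtain ⟨s, hs, rfl⟩ := h
  obtain ⟨t, ht, rfl⟩ := h'
  exact ⟨s * t, mul_ne_zero hs ht, by rw [mul_pow, mul_assoc]⟩

theorem mul (h : EqUpToNthPower n x y) (h' : EqUpToNthPower n x' y') :
    EqUpToNthPower n (x * x') (y * y') := by
  obtain ⟨s, hs, rfl⟩ := h
  obtain ⟨t, ht, rfl⟩ := h'
  exact ⟨s * t, mul_ne_zero hs ht, by rw [mul_pow, mul_mul_mul_comm]⟩

theorem inv (h : EqUpToNthPower n x y) : EqUpToNthPower n x⁻¹ y⁻¹ := by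
  obtain ⟨s, hs, rfl⟩ := h
  exact ⟨s⁻¹, inv_ne_zero hs, by rw [mul_inv, inv_pow]⟩

theorem div (h : EqUpToNthPower n x y) (h' : EqUpToNthPower n x' y') :
    EqUpToNthPower n (x / x') (y / y') := by
  simpa only [div_eq_mul_inv] using h.mul h'.inv

theorem pow (h : EqUpToNthPower n x y) (d : ℕ) : EqUpToNthPower n (x ^ d) (y ^ d) := by
  obtain ⟨s, hs, rfl⟩ := h
  exact ⟨s ^ d, pow_ne_zero d hs, by rw [mul_pow, ← pow_mul, ← pow_mul, mul_comm n d]⟩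

end EqUpToNthPower

theorem Polynomial.newtonMap_X_pow_sub_C_apply {K : Type*} [Field K] (n : ℕ) (u σ : K) :
    (X ^ n - C u).newtonMap σ = σ - (σ ^ n - u) / (n * σ ^ (n - 1)) := by
  simp [newtonMap_apply, Ring.inverse_eq_inv', div_eq_inv_mul, derivative_X_pow, mul_comm]

namespace AddValuation

section General

variable {R Γ₀ : Type*} [CommRing R] [LinearOrderedAddCommMonoidWithTop Γ₀] (v : AddValuation R Γ₀)

theorem natCast_nonneg (m : ℕ) : 0 ≤ v m := by
  induction m with
  | zero => simp
  | succ m ih => exact_mod_cast v.map_le_add ih v.map_one.ge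

theorem pow_nonneg {x : R} (hx : 0 ≤ v x) (m : ℕ) : 0 ≤ v (x ^ m) := by
  rw [v.map_pow]
  exact nsmul_nonneg hx m

theorem map_sub_le_map_pow_sub_pow {x y : R} (hx : 0 ≤ v x) (hy : 0 ≤ v y) (n : ℕ) :
    v (x - y) ≤ v (x ^ n - y ^ n) := by
  rw [← geom_sum₂_mul, v.map_mul]
  refine le_add_of_nonneg_left (v.map_le_sum fun i _ => ?_)
  rw [v.map_mul]
  exact add_nonneg (v.pow_nonneg hx i) (v.pow_nonneg hy _)

theorem exists_add_pow_eq {x y : R} (hx : 0 ≤ v x) (hy : 0 ≤ v y) (n : ℕ) :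
    ∃ E : R, 0 ≤ v E ∧ (x + y) ^ n = x ^ n + n * x ^ (n - 1) * y + y ^ 2 * E := by
  induction n with
  | zero => exact ⟨0, by simp, by simp⟩
  | succ n ih =>
    obtain ⟨E, hE, hxy⟩ := ih
    refine ⟨x * E + n * x ^ (n - 1) + y * E, ?_, ?_⟩
    · refine v.map_le_add (v.map_le_add ?_ ?_) ?_ <;> rw [v.map_mul]
      exacts [add_nonneg hx hE, add_nonneg (v.natCast_nonneg n) (v.pow_nonneg hx _),
        add_nonneg hy hE]
    · rw [pow_succ, hxy]
      rcases n with _ | n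
      · simp; ring
      · simp only [Nat.add_sub_cancel]; push_cast; ring

end General

variable {K : Type*} [Field K] (v : AddValuation K (WithTop ℤ))

theorem eq_zero_of_forall_le {x : K} (hx : ∀ k : ℤ, (k : WithTop ℤ) ≤ v x) : x = 0 := by
  by_contra hne
  obtain ⟨c, hc⟩ := WithTop.ne_top_iff_exists.mp (v.ne_top_iff.mpr hne)
  have := hx (c + 1)
  rw [← hc, WithTop.coe_le_coe] at this
  omega

theorem map_eq_zero_of_one_le_map_sub_one {x : K} (hx : 1 ≤ v (x - 1)) : v x = 0 := by
  rw [v.map_eq_of_lt_sub (lt_of_lt_of_le (by rw [v.map_one]; exact zero_lt_one) hx), v.map_one]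

theorem le_map_inv_of_map_le {x : K} {k : ℤ} (hx : v x ≤ ((-k : ℤ) : WithTop ℤ)) :
    (k : WithTop ℤ) ≤ v x⁻¹ := by
  obtain ⟨β, hβ⟩ := WithTop.ne_top_iff_exists.mp (ne_top_of_le_ne_top WithTop.coe_ne_top hx)
  rw [← hβ, WithTop.coe_le_coe] at hx
  rw [v.map_inv, ← hβ, ← WithTop.LinearOrderedAddCommGroup.coe_neg, WithTop.coe_le_coe]
  omega

theorem newtonMap_X_pow_sub_C_estimates {n : ℕ} {u σ : K} {ν e : ℤ} (hν : v n = ν) (he : 0 ≤ e)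
    (hσ : v σ = 0) (hσu : ((ν + e : ℤ) : WithTop ℤ) ≤ v (σ ^ n - u)) :
    (e : WithTop ℤ) ≤ v ((X ^ n - C u).newtonMap σ - σ) ∧
      ((2 * e : ℤ) : WithTop ℤ) ≤ v ((X ^ n - C u).newtonMap σ ^ n - u) := by
  have hD : v (n * σ ^ (n - 1)) = ν := by
    rw [v.map_mul, v.map_pow, hσ, smul_zero, add_zero, hν]
  have hD0 : (n : K) * σ ^ (n - 1) ≠ 0 := v.ne_top_iff.mp (by rw [hD]; exact WithTop.coe_ne_top)
  set h := (σ ^ n - u) / (n * σ ^ (n - 1))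
  have hDh : n * σ ^ (n - 1) * h = σ ^ n - u := mul_div_cancel₀ _ hD0
  have hh : (e : WithTop ℤ) ≤ v h := by
    rw [← add_le_add_iff_right_of_ne_top (WithTop.coe_ne_top (a := ν)), ← hD, ← v.map_mul, hDh,
      hD]
    exact_mod_cast hσu
  obtain ⟨E, hE, hbin⟩ := v.exists_add_pow_eq hσ.ge
    (by rw [v.map_neg]; exact le_trans (by exact_mod_cast he) hh) n
  rw [Polynomial.newtonMap_X_pow_sub_C_apply]
  refine ⟨by rwa [sub_sub_cancel_left, v.map_neg], ?_⟩
  have hkey : (σ - h) ^ n - u = h ^ 2 * E := by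
    linear_combination hbin - hDh
  rw [hkey, v.map_mul, v.map_pow]
  calc ((2 * e : ℤ) : WithTop ℤ)
      = 2 • (e : WithTop ℤ) + 0 := by rw [two_nsmul, add_zero, ← WithTop.coe_add, two_mul]
    _ ≤ 2 • v h + v E := add_le_add (nsmul_le_nsmul_right hh 2) hE

theorem exists_limit_of_le_map_succ_sub (hv : IsLocalField v) (a : ℕ → K) (c : ℤ)
    (ha : ∀ k : ℕ, ((c + k : ℤ) : WithTop ℤ) ≤ v (a (k + 1) - a k)) :
    ∃ L, ∀ k : ℕ, ((c + k : ℤ) : WithTop ℤ) ≤ v (a k - L) := by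
  have tail : ∀ k m : ℕ, k ≤ m → ((c + k : ℤ) : WithTop ℤ) ≤ v (a k - a m) := by
    intro k m hkm
    obtain ⟨j, rfl⟩ := Nat.exists_eq_add_of_le hkm
    rw [v.map_sub_swap]
    induction j with
    | zero => simp
    | succ j ih =>
      rw [← add_assoc, ← sub_add_sub_cancel (a (k + j + 1)) (a (k + j)) (a k)]
      exact v.map_le_add (le_trans (WithTop.coe_le_coe.mpr (by omega)) (ha _)) (ih (by omega))
  obtain ⟨L, hL⟩ := hv.complete a fun k' => ⟨(k' - c).toNat, fun m m' hm hm' => by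
    rcases le_total m m' with h | h
    · exact le_trans (WithTop.coe_le_coe.mpr (by omega)) (tail m m' h)
    · rw [v.map_sub_swap]
      exact le_trans (WithTop.coe_le_coe.mpr (by omega)) (tail m' m h)⟩
  refine ⟨L, fun k => ?_⟩
  obtain ⟨N, hN⟩ := hL (c + k)
  rw [← sub_add_sub_cancel (a k) (a (max N k)) L]
  exact v.map_le_add (tail k _ (le_max_right _ _)) (hN _ (le_max_left _ _))

theorem iterate_newtonMap_X_pow_sub_C_estimates {n : ℕ} {u : K} {ν : ℤ} (hν : v n = ν)
    (hu : ((2 * ν + 1 : ℤ) : WithTop ℤ) ≤ v (u - 1)) (k : ℕ) :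
    ((ν + 1 : ℤ) : WithTop ℤ) ≤ v ((X ^ n - C u).newtonMap^[k] 1 - 1) ∧
      ((2 * ν + 1 + k : ℤ) : WithTop ℤ) ≤ v ((X ^ n - C u).newtonMap^[k] 1 ^ n - u) ∧
      ((ν + 1 + k : ℤ) : WithTop ℤ) ≤
        v ((X ^ n - C u).newtonMap^[k + 1] 1 - (X ^ n - C u).newtonMap^[k] 1) := by
  have hν0 : 0 ≤ ν := by exact_mod_cast hν ▸ v.natCast_nonneg n
  set a : ℕ → K := fun k => (X ^ n - C u).newtonMap^[k] 1 with ha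
  have step : ∀ k : ℕ, ((ν + 1 : ℤ) : WithTop ℤ) ≤ v (a k - 1) →
      ((2 * ν + 1 + k : ℤ) : WithTop ℤ) ≤ v (a k ^ n - u) →
      ((ν + 1 + k : ℤ) : WithTop ℤ) ≤ v (a (k + 1) - a k) ∧
        ((2 * (ν + 1 + k) : ℤ) : WithTop ℤ) ≤ v (a (k + 1) ^ n - u) := by
    intro k h1 hk
    simp only [ha, Function.iterate_succ_apply']
    exact v.newtonMap_X_pow_sub_C_estimates hν (by omega)
      (v.map_eq_zero_of_one_le_map_sub_one (le_trans (WithTop.coe_le_coe.mpr (by omega)) h1))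
      (by rwa [show ν + (ν + 1 + k) = 2 * ν + 1 + k by ring])
  have approx : ∀ k : ℕ, ((ν + 1 : ℤ) : WithTop ℤ) ≤ v (a k - 1) ∧
      ((2 * ν + 1 + k : ℤ) : WithTop ℤ) ≤ v (a k ^ n - u) := by
    intro k
    induction k with
    | zero => simpa [ha, v.map_sub_swap 1 u] using hu
    | succ k ih =>
      have hk := step k ih.1 ih.2
      refine ⟨?_, le_trans (WithTop.coe_le_coe.mpr (by omega)) hk.2⟩
      rw [← sub_add_sub_cancel (a (k + 1)) (a k) 1]
      exact v.map_le_add (le_trans (WithTop.coe_le_coe.mpr (by omega)) hk.1) ih.1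
  exact ⟨(approx k).1, (approx k).2, (step k (approx k).1 (approx k).2).1⟩

theorem eqUpToNthPower_one_of_le_map_sub_one (hv : IsLocalField v) {n : ℕ} (hn : (n : K) ≠ 0) :
    ∃ M : ℤ, ∀ u : K, (M : WithTop ℤ) ≤ v (u - 1) → EqUpToNthPower n u 1 := by
  obtain ⟨ν, hν⟩ := WithTop.ne_top_iff_exists.mp (v.ne_top_iff.mpr hn)
  have hν0 : 0 ≤ ν := by exact_mod_cast hν ▸ v.natCast_nonneg n
  refine ⟨2 * ν + 1, fun u hu => ?_⟩
  set a : ℕ → K := fun k => (X ^ n - C u).newtonMap^[k] 1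
  have est := v.iterate_newtonMap_X_pow_sub_C_estimates hν.symm hu
  have hunit : ∀ k, v (a k) = 0 := fun k => v.map_eq_zero_of_one_le_map_sub_one
    (le_trans (WithTop.coe_le_coe.mpr (by omega)) (est k).1)
  obtain ⟨L, hL⟩ := v.exists_limit_of_le_map_succ_sub hv a (ν + 1) fun k => (est k).2.2
  have hL1 : ((ν + 1 : ℤ) : WithTop ℤ) ≤ v (L - 1) := by
    simpa [a, v.map_sub_swap 1 L] using hL 0
  have hLunit : v L = 0 :=
    v.map_eq_zero_of_one_le_map_sub_one (le_trans (WithTop.coe_le_coe.mpr (by omega)) hL1)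
  have hLu : L ^ n = u := by
    rw [← sub_eq_zero]
    refine v.eq_zero_of_forall_le fun k' => ?_
    set k := (k' - ν - 1).toNat
    rw [← sub_add_sub_cancel (L ^ n) (a k ^ n) u]
    refine v.map_le_add ?_ (le_trans (WithTop.coe_le_coe.mpr (by omega)) (est k).2.1)
    refine le_trans (le_trans (WithTop.coe_le_coe.mpr (by omega)) (hL k)) ?_
    rw [v.map_sub_swap]
    exact v.map_sub_le_map_pow_sub_pow hLunit.ge (hunit k).ge n
  refine ⟨L, v.ne_top_iff.mp ?_, by rw [hLu, mul_one]⟩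
  rw [hLunit]
  exact WithTop.zero_ne_top

theorem eqUpToNthPower_of_le_map_sub (hv : IsLocalField v) {n : ℕ} (hn : (n : K) ≠ 0) :
    ∃ M : ℤ, ∀ x y : K, y ≠ 0 → (M : WithTop ℤ) + v y ≤ v (x - y) → EqUpToNthPower n x y := by
  obtain ⟨M, hM⟩ := v.eqUpToNthPower_one_of_le_map_sub_one hv hn
  refine ⟨M, fun x y hy hxy => ?_⟩
  have h1 : (M : WithTop ℤ) ≤ v (x / y - 1) := by
    rwa [← add_le_add_iff_left_of_ne_top (v.ne_top_iff.mpr hy), ← v.map_mul, sub_mul,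
      div_mul_cancel₀ x hy, one_mul]
  simpa [div_mul_cancel₀ x hy] using (hM _ h1).mul (EqUpToNthPower.refl y)

theorem exists_le_map_eval (p : K[X]) :
    ∃ c : ℤ, ∀ w : K, 0 ≤ v w → (c : WithTop ℤ) ≤ v (p.eval w) := by
  induction p using Polynomial.induction_on' with
  | add p q hp hq =>
    obtain ⟨c₁, hc₁⟩ := hp
    obtain ⟨c₂, hc₂⟩ := hq
    refine ⟨min c₁ c₂, fun w hw => ?_⟩
    rw [eval_add]
    exact v.map_le_add (le_trans (WithTop.coe_le_coe.mpr (min_le_left _ _)) (hc₁ w hw))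
      (le_trans (WithTop.coe_le_coe.mpr (min_le_right _ _)) (hc₂ w hw))
  | monomial m a =>
    obtain ⟨c, hc⟩ : ∃ c : ℤ, (c : WithTop ℤ) ≤ v a := by
      induction v a using WithTop.recTopCoe with
      | top => exact ⟨0, le_top⟩
      | coe c => exact ⟨c, le_rfl⟩
    refine ⟨c, fun w hw => ?_⟩
    rw [eval_monomial, v.map_mul]
    exact le_add_of_le_of_nonneg hc (v.pow_nonneg hw m)

theorem exists_le_map_eval_sub_eval_zero (p : K[X]) (M : ℤ) :
    ∃ k : ℤ, ∀ w : K, (k : WithTop ℤ) ≤ v w → (M : WithTop ℤ) ≤ v (p.eval w - p.eval 0) := by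
  obtain ⟨c, hc⟩ := v.exists_le_map_eval p.divX
  refine ⟨max 0 (M - c), fun w hw => ?_⟩
  have hw0 : 0 ≤ v w := le_trans (by exact_mod_cast le_max_left 0 (M - c)) hw
  have hp : p.eval w - p.eval 0 = p.divX.eval w * w := by
    conv_lhs => rw [← divX_mul_X_add p]
    simp
  rw [hp, v.map_mul]
  calc (M : WithTop ℤ) ≤ ((c + max 0 (M - c) : ℤ) : WithTop ℤ) := WithTop.coe_le_coe.mpr (by omega)
    _ ≤ v (p.divX.eval w) + v w := by push_cast; exact add_le_add (hc w hw0) hw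

theorem eqUpToNthPower_eval (hv : IsLocalField v) {n : ℕ} (hn : (n : K) ≠ 0) (q : K[X]) :
    ∃ k : ℤ, ∀ w₁ w₂ : K, (k : WithTop ℤ) ≤ v w₁ → (k : WithTop ℤ) ≤ v w₂ →
      EqUpToNthPower n w₁ w₂ → EqUpToNthPower n (q.eval w₁) (q.eval w₂) := by
  rcases eq_or_ne q 0 with rfl | hq
  · exact ⟨0, fun _ _ _ _ _ => by simpa only [eval_zero] using .refl 0⟩
  obtain ⟨r, hqr, hr⟩ := q.exists_eq_pow_rootMultiplicity_mul_and_not_dvd hq 0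
  rw [C_0, sub_zero] at hqr hr
  have hr0 : r.eval 0 ≠ 0 := by rwa [X_dvd_iff, coeff_zero_eq_eval_zero] at hr
  obtain ⟨β, hβ⟩ := WithTop.ne_top_iff_exists.mp (v.ne_top_iff.mpr hr0)
  obtain ⟨M, hM⟩ := v.eqUpToNthPower_of_le_map_sub hv hn
  obtain ⟨k, hk⟩ := v.exists_le_map_eval_sub_eval_zero r (M + β)
  have hr_near : ∀ w, (k : WithTop ℤ) ≤ v w → EqUpToNthPower n (r.eval w) (r.eval 0) :=
    fun w hw => hM _ _ hr0 (by rw [← hβ]; exact_mod_cast hk w hw)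
  refine ⟨k, fun w₁ w₂ h₁ h₂ hw => ?_⟩
  rw [hqr]
  simp only [eval_mul, eval_pow, eval_X]
  exact (hw.pow _).mul ((hr_near w₁ h₁).trans (hr_near w₂ h₂).symm)

end AddValuation

theorem Polynomial.eval_mvPolynomial_aeval {R σ : Type*} [CommSemiring R] (g : σ → R[X])
    (P : MvPolynomial σ R) (u : R) :
    (MvPolynomial.aeval g P).eval u = MvPolynomial.eval (fun i => (g i).eval u) P := by
  rw [← coe_aeval_eq_eval, MvPolynomial.comp_aeval_apply, ← MvPolynomial.coe_aeval_eq_eval]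
  rfl

namespace MvPolynomial.IsHomogeneous

theorem eval_smul {R σ : Type*} [CommSemiring R] {P : MvPolynomial σ R} {d : ℕ}
    (hP : P.IsHomogeneous d) (c : R) (g : σ → R) :
    eval (c • g) P = c ^ d * eval g P := by
  rw [eval_eq, eval_eq, Finset.mul_sum]
  refine Finset.sum_congr rfl fun m hm => ?_
  simp_rw [Pi.smul_apply, smul_eq_mul, mul_pow, Finset.prod_mul_distrib, Finset.prod_pow_eq_pow_sum,
    ← hP.degree_eq_sum_deg_support hm]
  ring

variable {K : Type*} [Field K] {P : MvPolynomial (Fin 2) K} {d : ℕ}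

theorem eval_pair_eq_of_ne_zero_right (hP : P.IsHomogeneous d) {x y : K} (hy : y ≠ 0) (t : K) :
    eval ![x, y] P = y ^ d * (MvPolynomial.aeval ![Polynomial.X + Polynomial.C t, 1] P).eval
      (x / y - t) := by
  have hxy : ![x, y] = y • ![x / y, 1] := by
    ext i
    fin_cases i <;> simp [mul_div_cancel₀ _ hy]
  rw [hxy, hP.eval_smul, Polynomial.eval_mvPolynomial_aeval]
  congr
  ext i
  fin_cases i <;> simp

theorem eval_pair_eq_of_ne_zero_left (hP : P.IsHomogeneous d) {x y : K} (hx : x ≠ 0) :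
    eval ![x, y] P = x ^ d * (MvPolynomial.aeval ![1, Polynomial.X] P).eval (y / x) := by
  have hxy : ![x, y] = x • ![1, y / x] := by
    ext i
    fin_cases i <;> simp [mul_div_cancel₀ _ hx]
  rw [hxy, hP.eval_smul, Polynomial.eval_mvPolynomial_aeval]
  congr
  ext i
  fin_cases i <;> simp

end MvPolynomial.IsHomogeneous

theorem stmt7_general {K : Type*} [Field K] (v : K → WithTop ℤ) (hK : IsLocalField v)
    (n : ℕ) (hn : 0 < n) (hchar : ringChar K = 0 ∨ ¬ (ringChar K ∣ n))
    (P : MvPolynomial (Fin 2) K) (d : ℕ) (hhom : P.IsHomogeneous d) :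
    (∀ t₀ : K, ∃ k : ℤ, ∀ x₁ y₁ x₂ y₂ : K,
        min (v x₁) (v y₁) = 0 → min (v x₂) (v y₂) = 0 →
        y₁ ≠ 0 → y₂ ≠ 0 → x₁ / y₁ ≠ t₀ → x₂ / y₂ ≠ t₀ →
        (k : WithTop ℤ) ≤ v (x₁ / y₁ - t₀) → (k : WithTop ℤ) ≤ v (x₂ / y₂ - t₀) →
        MvPolynomial.eval ![x₁, y₁] P ≠ 0 → MvPolynomial.eval ![x₂, y₂] P ≠ 0 →
        (∃ s : K, s ≠ 0 ∧ x₁ - t₀ * y₁ = s ^ n * (x₂ - t₀ * y₂)) →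
        (∃ s : K, s ≠ 0 ∧ y₁ = s ^ n * y₂) →
        ∃ s : K, s ≠ 0 ∧
          MvPolynomial.eval ![x₁, y₁] P = s ^ n * MvPolynomial.eval ![x₂, y₂] P)
    ∧ (∃ k : ℤ, ∀ x₁ y₁ x₂ y₂ : K,
        min (v x₁) (v y₁) = 0 → min (v x₂) (v y₂) = 0 →
        y₁ ≠ 0 → y₂ ≠ 0 →
        v (x₁ / y₁) ≤ (k : WithTop ℤ) → v (x₂ / y₂) ≤ (k : WithTop ℤ) →
        MvPolynomial.eval ![x₁, y₁] P ≠ 0 → MvPolynomial.eval ![x₂, y₂] P ≠ 0 →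
        (∃ s : K, s ≠ 0 ∧ x₁ = s ^ n * x₂) →
        (∃ s : K, s ≠ 0 ∧ y₁ = s ^ n * y₂) →
        ∃ s : K, s ≠ 0 ∧
          MvPolynomial.eval ![x₁, y₁] P = s ^ n * MvPolynomial.eval ![x₂, y₂] P) := by
  have hnK : (n : K) ≠ 0 := fun h0 => by
    have hdvd := (ringChar.spec K n).mp h0
    rcases hchar with h | h
    · rw [h, zero_dvd_iff] at hdvd
      omega
    · exact h hdvd
  set w := hK.addValuation
  have hw : IsLocalField w := hK
  constructor
  · intro t₀
    obtain ⟨k, hk⟩ := w.eqUpToNthPower_eval hw hnK (MvPolynomial.aeval ![X + C t₀, 1] P)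
    refine ⟨k, fun x₁ y₁ x₂ y₂ _ _ hy₁ hy₂ _ _ h₁ h₂ _ _ (hx : EqUpToNthPower n _ _)
      (hy : EqUpToNthPower n y₁ y₂) => ?_⟩
    have hslope : ∀ x y, y ≠ 0 → x / y - t₀ = (x - t₀ * y) / y := fun x y hy => by field_simp
    rw [hhom.eval_pair_eq_of_ne_zero_right hy₁ t₀, hhom.eval_pair_eq_of_ne_zero_right hy₂ t₀]
    refine (hy.pow d).mul (hk _ _ h₁ h₂ ?_)
    rw [hslope _ _ hy₁, hslope _ _ hy₂]
    exact hx.div hy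
  · obtain ⟨k, hk⟩ := w.eqUpToNthPower_eval hw hnK (MvPolynomial.aeval ![1, X] P)
    refine ⟨-k, fun x₁ y₁ x₂ y₂ _ _ _ _ h₁ h₂ _ _ (hx : EqUpToNthPower n x₁ x₂)
      (hy : EqUpToNthPower n y₁ y₂) => ?_⟩
    have hx_ne : ∀ x y : K, v (x / y) ≤ ((-k : ℤ) : WithTop ℤ) → x ≠ 0 := fun x y h =>
      (div_ne_zero_iff.mp (w.ne_top_iff.mp (ne_top_of_le_ne_top WithTop.coe_ne_top h))).1
    rw [hhom.eval_pair_eq_of_ne_zero_left (hx_ne _ _ h₁),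
      hhom.eval_pair_eq_of_ne_zero_left (hx_ne _ _ h₂)]
    refine (hx.pow d).mul (hk _ _ ?_ ?_ (hy.div hx)) <;> rw [← inv_div]
    exacts [w.le_map_inv_of_map_le h₁, w.le_map_inv_of_map_le h₂]

/-- Let `K` be a local field and `n` a positive integer with `char K ∤ n`.
Let `P ∈ K[x,y]` be a nonzero homogeneous polynomial, and let
`R = {(x,y) ∈ K × K : min(v x, v y) = 0}`.  Then for every `t₀ ∈ ℙ¹(K)` there is a
punctured neighbourhood `U_{t₀}` of `t₀` such that, for all `(x,y) ∈ R` with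
`x/y ∈ U_{t₀}` and `P(x,y) ≠ 0`, the class of `P(x,y)` in `K^*/(K^*)^n` depends only on
the classes of `x − t₀·y` and of `y` in `K^*/(K^*)^n` (only on the classes of `x` and of
`y` if `t₀ = ∞`). -/
theorem stmt7 {K : Type*} [Field K] (v : K → WithTop ℤ) (hK : IsLocalField v)
    (n : ℕ) (hn : 0 < n) (hchar : ringChar K = 0 ∨ ¬ (ringChar K ∣ n))
    (P : MvPolynomial (Fin 2) K) (hP : P ≠ 0) (d : ℕ) (hhom : P.IsHomogeneous d) :
    (∀ t₀ : K, ∃ k : ℤ, ∀ x₁ y₁ x₂ y₂ : K,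
        min (v x₁) (v y₁) = 0 → min (v x₂) (v y₂) = 0 →
        y₁ ≠ 0 → y₂ ≠ 0 → x₁ / y₁ ≠ t₀ → x₂ / y₂ ≠ t₀ →
        (k : WithTop ℤ) ≤ v (x₁ / y₁ - t₀) → (k : WithTop ℤ) ≤ v (x₂ / y₂ - t₀) →
        MvPolynomial.eval ![x₁, y₁] P ≠ 0 → MvPolynomial.eval ![x₂, y₂] P ≠ 0 →
        (∃ s : K, s ≠ 0 ∧ x₁ - t₀ * y₁ = s ^ n * (x₂ - t₀ * y₂)) →
        (∃ s : K, s ≠ 0 ∧ y₁ = s ^ n * y₂) →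
        ∃ s : K, s ≠ 0 ∧
          MvPolynomial.eval ![x₁, y₁] P = s ^ n * MvPolynomial.eval ![x₂, y₂] P)
    ∧ (∃ k : ℤ, ∀ x₁ y₁ x₂ y₂ : K,
        min (v x₁) (v y₁) = 0 → min (v x₂) (v y₂) = 0 →
        y₁ ≠ 0 → y₂ ≠ 0 →
        v (x₁ / y₁) ≤ (k : WithTop ℤ) → v (x₂ / y₂) ≤ (k : WithTop ℤ) →
        MvPolynomial.eval ![x₁, y₁] P ≠ 0 → MvPolynomial.eval ![x₂, y₂] P ≠ 0 →
        (∃ s : K, s ≠ 0 ∧ x₁ = s ^ n * x₂) →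
        (∃ s : K, s ≠ 0 ∧ y₁ = s ^ n * y₂) →
        ∃ s : K, s ≠ 0 ∧
          MvPolynomial.eval ![x₁, y₁] P = s ^ n * MvPolynomial.eval ![x₂, y₂] P) :=
  stmt7_general v hK n hn hchar P d hhom
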